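/- Let ρ be a density matrix on a bipartite finite-dimensional system H_A ⊗ H_B (i.e. a positive semidefinite trace-one complex matrix indexed by pairs of indices), let O_x be a matrix acting on H_A and O_y a matrix acting on H_B. Then ‖O_y‖∞ · F(ρ_A, O_x ρ_A O_x†) ≥ F(ρ, M ρ M†), where M = O_x ⊗ O_y† and ρ_A = Tr_B ρ is the partial trace of ρ over H_B. (Global SW-SSB implies local SW-SSB.) -/

import Mathlib

noncomputable section

open scoped Matrix Kronecker ComplexOrder

/-- The positive semidefinite square root of a matrix (defaults to `0` if not PSD). -/
noncomputable def matSqrt {n : Type*} [Fintype n] [DecidableEq n] (M : Matrix n n ℂ) :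
    Matrix n n ℂ :=
  open scoped Classical in
  if h : M.PosSemidef then
    h.1.eigenvectorUnitary.1 * Matrix.diagonal ((fun x : ℝ => (x : ℂ)) ∘ Real.sqrt ∘ h.1.eigenvalues) *
      (star h.1.eigenvectorUnitary : Matrix n n ℂ)
  else 0

/-- The fidelity `F(ρ, σ) = tr √(√ρ σ √ρ)` of two PSD matrices. -/
noncomputable def fidelity {n : Type*} [Fintype n] [DecidableEq n] (ρ σ : Matrix n n ℂ) : ℝ :=
  (matSqrt (matSqrt ρ * σ * matSqrt ρ)).trace.re

/-- The ℓ²→ℓ² operator norm of a complex matrix. -/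
noncomputable def opNorm {m n : Type*} [Fintype m] [Fintype n] [DecidableEq n]
    (M : Matrix m n ℂ) : ℝ :=
  ‖(Matrix.toEuclideanLin.trans LinearMap.toContinuousLinearMap) M‖

/-- Partial trace over the second tensor factor. -/
noncomputable def ptraceB {A B : Type*} [Fintype B]
    (ρ : Matrix (A × B) (A × B) ℂ) : Matrix A A ℂ :=
  Matrix.of fun a a' => ∑ b : B, ρ (a, b) (a', b)

/-
Write `S = √ρ` and `X = S (O_x† ⊗ O_y) S`. Then `F(ρ, M ρ M†) = tr |X| = ‖X‖₁`, and likewise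
`F(ρ_A, O_x ρ_A O_x†) = ‖√ρ_A O_x† √ρ_A‖₁`. By duality, `‖X‖₁ = Re tr (X W)` for some contraction
`W`. Reshaping `S` into the `A × (B × AB)` matrix `P a (b, k) = S (a, b) k` gives `P P† = ρ_A` and
`tr (X W) = tr (P† O_x† P (O_yᵀ ⊗ W))`, so `‖X‖₁ ≤ ‖O_y‖ ‖P† O_x† P‖₁`. Finally the polar
decomposition of `P†` writes `P = √ρ_A V` with `‖V‖ ≤ 1`, and compressing by a contraction does not
increase the trace norm.
-/

open scoped Matrix.Norms.L2Operator MatrixOrder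

namespace Matrix

lemma matSqrt_eq_sqrt {n : Type*} [Fintype n] [DecidableEq n] {M : Matrix n n ℂ}
    (hM : M.PosSemidef) : matSqrt M = CFC.sqrt M := by
  rw [matSqrt, dif_pos hM, CFC.sqrt_eq_cfc, cfc_nnreal_eq_real _ M, hM.1.cfc_eq]
  simp only [IsHermitian.cfc, Unitary.conjStarAlgAut_apply]
  congr 3
  ext x
  simp [hM.eigenvalues_nonneg x]

section Kronecker

variable {m n : Type*} [Fintype m] [DecidableEq m] [Fintype n] [DecidableEq n]

def kroneckerOneStarAlgHom : Matrix m m ℂ →⋆ₐ[ℂ] Matrix (m × n) (m × n) ℂ where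
  toFun A := A ⊗ₖ (1 : Matrix n n ℂ)
  map_one' := one_kronecker_one
  map_mul' A B := by rw [← mul_kronecker_mul, Matrix.mul_one]
  map_zero' := zero_kronecker _
  map_add' A B := add_kronecker _ _ _
  commutes' c := by simp [Algebra.algebraMap_eq_smul_one, smul_kronecker]
  map_star' A := by simp [star_eq_conjTranspose, conjTranspose_kronecker]

def oneKroneckerStarAlgHom : Matrix n n ℂ →⋆ₐ[ℂ] Matrix (m × n) (m × n) ℂ where
  toFun B := (1 : Matrix m m ℂ) ⊗ₖ B
  map_one' := one_kronecker_one
  map_mul' A B := by rw [← mul_kronecker_mul, Matrix.mul_one]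
  map_zero' := kronecker_zero _
  map_add' A B := kronecker_add _ _ _
  commutes' c := by simp [Algebra.algebraMap_eq_smul_one, kronecker_smul]
  map_star' A := by simp [star_eq_conjTranspose, conjTranspose_kronecker]

lemma l2_opNorm_kronecker_le (A : Matrix m m ℂ) (B : Matrix n n ℂ) : ‖A ⊗ₖ B‖ ≤ ‖A‖ * ‖B‖ := by
  have h : A ⊗ₖ B = kroneckerOneStarAlgHom A * oneKroneckerStarAlgHom B := by
    simp [kroneckerOneStarAlgHom, oneKroneckerStarAlgHom, ← mul_kronecker_mul]
  rw [h]
  exact (norm_mul_le _ _).trans (mul_le_mul (NonUnitalStarAlgHom.norm_apply_le _ _)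
    (NonUnitalStarAlgHom.norm_apply_le _ _) (norm_nonneg _) (norm_nonneg _))

end Kronecker

lemma l2_opNorm_transpose_le {m n : Type*} [Fintype m] [DecidableEq m] [Fintype n]
    [DecidableEq n] (M : Matrix m n ℂ) : ‖Mᵀ‖ ≤ ‖M‖ := by
  refine ContinuousLinearMap.opNorm_le_bound _ (norm_nonneg _) fun x => ?_
  have h : Mᵀ *ᵥ x.ofLp = star (Mᴴ *ᵥ star x.ofLp) := by
    rw [star_mulVec, star_star, conjTranspose_conjTranspose, mulVec_transpose]
  have := l2_opNorm_mulVec Mᴴ (WithLp.toLp 2 (star x.ofLp))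
  rw [l2_opNorm_conjTranspose] at this
  change ‖WithLp.toLp 2 (Mᵀ *ᵥ x.ofLp)‖ ≤ _
  simpa [h, EuclideanSpace.norm_eq] using this

section PseudoInverse

variable {n : Type*} [Fintype n] [DecidableEq n] {T : Matrix n n ℂ}

/-- `cfc (·⁻¹) T` is the Moore–Penrose pseudo-inverse of `T`, since `0⁻¹ = 0` in `ℝ`; every
function is continuous on the finite spectrum of a matrix. -/
lemma mul_cfc_inv_mul_self (hT : IsSelfAdjoint T) : T * cfc (·⁻¹ : ℝ → ℝ) T * T = T := by
  have hcont (f : ℝ → ℝ) : ContinuousOn f (spectrum ℝ T) := T.finite_real_spectrum.continuousOn f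
  nth_rw 1 [← cfc_id' ℝ T]
  nth_rw 3 [← cfc_id' ℝ T]
  rw [← cfc_mul _ _ T (hcont _) (hcont _), ← cfc_mul _ _ T (hcont _) (hcont _)]
  conv_rhs => rw [← cfc_id' ℝ T]
  exact cfc_congr fun x _ => mul_inv_mul_cancel x

lemma norm_cfc_inv_mul_self_mul_self_mul_cfc_inv_le_one (hT : IsSelfAdjoint T) :
    ‖cfc (·⁻¹ : ℝ → ℝ) T * T * T * cfc (·⁻¹ : ℝ → ℝ) T‖ ≤ 1 := by
  have hcont (f : ℝ → ℝ) : ContinuousOn f (spectrum ℝ T) := T.finite_real_spectrum.continuousOn f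
  nth_rw 2 [← cfc_id' ℝ T]
  nth_rw 3 [← cfc_id' ℝ T]
  rw [← cfc_mul _ _ T (hcont _) (hcont _), ← cfc_mul _ _ T (hcont _) (hcont _),
    ← cfc_mul _ _ T (hcont _) (hcont _)]
  refine norm_cfc_le zero_le_one fun x _ => ?_
  rcases eq_or_ne x 0 with rfl | hx
  · simp
  · simp [hx]

end PseudoInverse

section Polar

variable {m n : Type*} [Fintype m] [Fintype n] [DecidableEq n] (X : Matrix m n ℂ)

lemma sqrt_mul_sqrt_conjTranspose_mul_self :
    CFC.sqrt (Xᴴ * X) * CFC.sqrt (Xᴴ * X) = Xᴴ * X :=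
  CFC.sqrt_mul_sqrt_self _ (nonneg_iff_posSemidef.mpr (posSemidef_conjTranspose_mul_self X))

def polarIsometry : Matrix m n ℂ :=
  X * cfc (·⁻¹ : ℝ → ℝ) (CFC.sqrt (Xᴴ * X))

lemma polarIsometry_mul_sqrt : polarIsometry X * CFC.sqrt (Xᴴ * X) = X := by
  have hTT := sqrt_mul_sqrt_conjTranspose_mul_self X
  have hT : IsSelfAdjoint (CFC.sqrt (Xᴴ * X)) := (CFC.sqrt_nonneg _).isSelfAdjoint
  rw [polarIsometry]
  generalize CFC.sqrt (Xᴴ * X) = T at hTT hT ⊢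
  have hTH : Tᴴ = T := hT
  have hT' : (cfc (·⁻¹ : ℝ → ℝ) T)ᴴ = cfc (·⁻¹ : ℝ → ℝ) T := (cfc_predicate _ _ : IsSelfAdjoint _)
  have hTT'T : T - T * cfc (·⁻¹ : ℝ → ℝ) T * T = 0 :=
    sub_eq_zero.mpr (mul_cfc_inv_mul_self hT).symm
  have h1 : (1 - cfc (·⁻¹ : ℝ → ℝ) T * T)ᴴ * T = (T - T * cfc (·⁻¹ : ℝ → ℝ) T * T)ᴴ := by
    simp only [conjTranspose_sub, conjTranspose_one, conjTranspose_mul, hTH, hT',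
      Matrix.sub_mul, Matrix.one_mul, Matrix.mul_assoc]
  have h2 : T * (1 - cfc (·⁻¹ : ℝ → ℝ) T * T) = T - T * cfc (·⁻¹ : ℝ → ℝ) T * T := by
    noncomm_ring
  -- `X (1 - T⁺ T)` vanishes because its Gram matrix factors through `T - T T⁺ T = 0`.
  suffices X * (1 - cfc (·⁻¹ : ℝ → ℝ) T * T) = 0 by
    rwa [Matrix.mul_sub, Matrix.mul_one, sub_eq_zero, eq_comm, ← Matrix.mul_assoc] at this
  rw [← conjTranspose_mul_self_eq_zero, conjTranspose_mul, Matrix.mul_assoc, ← Matrix.mul_assoc Xᴴ,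
    ← hTT, Matrix.mul_assoc T, ← Matrix.mul_assoc, h1, h2, hTT'T, Matrix.mul_zero]

lemma norm_polarIsometry_le_one : ‖polarIsometry X‖ ≤ 1 := by
  have hTT := sqrt_mul_sqrt_conjTranspose_mul_self X
  have hT : IsSelfAdjoint (CFC.sqrt (Xᴴ * X)) := (CFC.sqrt_nonneg _).isSelfAdjoint
  rw [polarIsometry]
  generalize CFC.sqrt (Xᴴ * X) = T at hTT hT ⊢
  have hT' : (cfc (·⁻¹ : ℝ → ℝ) T)ᴴ = cfc (·⁻¹ : ℝ → ℝ) T := (cfc_predicate _ _ : IsSelfAdjoint _)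
  have hsq : ‖X * cfc (·⁻¹ : ℝ → ℝ) T‖ * ‖X * cfc (·⁻¹ : ℝ → ℝ) T‖ ≤ 1 := by
    rw [← l2_opNorm_conjTranspose_mul_self, conjTranspose_mul, hT', Matrix.mul_assoc,
      ← Matrix.mul_assoc Xᴴ, ← hTT]
    simpa only [Matrix.mul_assoc] using norm_cfc_inv_mul_self_mul_self_mul_cfc_inv_le_one hT
  nlinarith [norm_nonneg (X * cfc (·⁻¹ : ℝ → ℝ) T)]

end Polar

section TraceNorm

variable {m n : Type*} [Fintype m] [DecidableEq m] [Fintype n] [DecidableEq n]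

/-- Conjugate `Z + Zᴴ ≤ ‖Z + Zᴴ‖` by `√T` and take traces. -/
lemma re_trace_mul_le_of_nonneg {T : Matrix n n ℂ} (hT : 0 ≤ T) (Z : Matrix n n ℂ) :
    (T * Z).trace.re ≤ ‖Z‖ * T.trace.re := by
  set S := CFC.sqrt T
  have hS : star S = S := (CFC.sqrt_nonneg T).isSelfAdjoint
  have hSS : S * S = T := CFC.sqrt_mul_sqrt_self T
  have hle := star_left_conjugate_le_conjugate
    (IsSelfAdjoint.le_algebraMap_norm_self (IsSelfAdjoint.add_star_self Z)) S
  have htr := (nonneg_iff_posSemidef.mp (sub_nonneg.mpr hle)).trace_nonneg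
  have hT0 : 0 ≤ T.trace.re := (Complex.nonneg_iff.mp (nonneg_iff_posSemidef.mp hT).trace_nonneg).1
  have hZ : ‖Z + star Z‖ ≤ 2 * ‖Z‖ := (norm_add_le _ _).trans (by rw [norm_star]; linarith)
  rw [hS, trace_sub, Algebra.algebraMap_eq_smul_one, mul_smul_comm, mul_one, smul_mul_assoc, hSS,
    mul_add, add_mul, trace_add] at htr
  have hSZS : (S * Z * S).trace = (T * Z).trace := by rw [trace_mul_cycle, hSS]
  have hSZS' : (S * star Z * S).trace = star (T * Z).trace := by
    rw [← hSZS, ← trace_conjTranspose, ← star_eq_conjTranspose]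
    simp only [star_mul, hS, mul_assoc]
  rw [hSZS, hSZS', trace_smul] at htr
  have := (Complex.nonneg_iff.mp htr).1
  simp only [Complex.sub_re, Complex.add_re, Complex.real_smul, Complex.re_ofReal_mul,
    Complex.star_def, Complex.conj_re] at this
  nlinarith

def traceNorm (X : Matrix n n ℂ) : ℝ :=
  (CFC.abs X).trace.re

lemma traceNorm_nonneg (X : Matrix n n ℂ) : 0 ≤ traceNorm X :=
  (Complex.nonneg_iff.mp (nonneg_iff_posSemidef.mp (CFC.abs_nonneg X)).trace_nonneg).1

lemma re_trace_mul_le_traceNorm (X W : Matrix n n ℂ) : (X * W).trace.re ≤ ‖W‖ * traceNorm X := by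
  calc (X * W).trace.re = (CFC.abs X * (W * polarIsometry X)).trace.re := by
        conv_lhs => rw [← polarIsometry_mul_sqrt X]
        rw [Matrix.mul_assoc, trace_mul_comm, Matrix.mul_assoc]
        rfl
    _ ≤ ‖W * polarIsometry X‖ * traceNorm X := re_trace_mul_le_of_nonneg (CFC.abs_nonneg X) _
    _ ≤ ‖W‖ * traceNorm X := by
        refine mul_le_mul_of_nonneg_right ((norm_mul_le _ _).trans ?_) (traceNorm_nonneg X)
        simpa using mul_le_mul_of_nonneg_left (norm_polarIsometry_le_one X) (norm_nonneg W)

lemma exists_re_trace_mul_eq_traceNorm (X : Matrix n n ℂ) :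
    ∃ W : Matrix n n ℂ, ‖W‖ ≤ 1 ∧ (X * W).trace.re = traceNorm X := by
  refine ⟨(polarIsometry X)ᴴ,
    (l2_opNorm_conjTranspose _).trans_le (norm_polarIsometry_le_one X), ?_⟩
  have hTT := sqrt_mul_sqrt_conjTranspose_mul_self X
  have hT : IsSelfAdjoint (CFC.sqrt (Xᴴ * X)) := (CFC.sqrt_nonneg _).isSelfAdjoint
  rw [traceNorm, CFC.abs, star_eq_conjTranspose, polarIsometry]
  generalize CFC.sqrt (Xᴴ * X) = T at hTT hT ⊢
  have hT' : (cfc (·⁻¹ : ℝ → ℝ) T)ᴴ = cfc (·⁻¹ : ℝ → ℝ) T := (cfc_predicate _ _ : IsSelfAdjoint _)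
  rw [conjTranspose_mul, hT', ← Matrix.mul_assoc, trace_mul_comm, ← Matrix.mul_assoc, ← hTT,
    Matrix.mul_assoc, trace_mul_comm, mul_cfc_inv_mul_self hT]

lemma traceNorm_conjTranspose_mul_mul_le (Y : Matrix n n ℂ) {C : Matrix n m ℂ} (hC : ‖C‖ ≤ 1) :
    traceNorm (Cᴴ * Y * C) ≤ traceNorm Y := by
  obtain ⟨W, hW, hYW⟩ := exists_re_trace_mul_eq_traceNorm (Cᴴ * Y * C)
  have hCWC : ‖C * W * Cᴴ‖ ≤ 1 :=
    calc ‖C * W * Cᴴ‖ ≤ ‖C‖ * ‖W‖ * ‖C‖ := by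
          rw [← l2_opNorm_conjTranspose C]
          refine (l2_opNorm_mul _ _).trans (mul_le_mul_of_nonneg_right ?_ (norm_nonneg _))
          rw [l2_opNorm_conjTranspose]
          exact l2_opNorm_mul _ _
      _ ≤ 1 * 1 * 1 := by gcongr
      _ = 1 := by norm_num
  calc traceNorm (Cᴴ * Y * C) = (Y * (C * W * Cᴴ)).trace.re := by
        rw [← hYW, Matrix.mul_assoc, Matrix.mul_assoc, trace_mul_comm]
        simp only [Matrix.mul_assoc]
    _ ≤ ‖C * W * Cᴴ‖ * traceNorm Y := re_trace_mul_le_traceNorm _ _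
    _ ≤ traceNorm Y := mul_le_of_le_one_left (traceNorm_nonneg Y) hCWC

lemma traceNorm_conjTranspose_mul_mul_le_sqrt (P : Matrix n m ℂ) (F : Matrix n n ℂ) :
    traceNorm (Pᴴ * F * P) ≤ traceNorm (CFC.sqrt (P * Pᴴ) * F * CFC.sqrt (P * Pᴴ)) := by
  have hpolar := polarIsometry_mul_sqrt Pᴴ
  rw [conjTranspose_conjTranspose] at hpolar
  have hT : (CFC.sqrt (P * Pᴴ))ᴴ = CFC.sqrt (P * Pᴴ) := (CFC.sqrt_nonneg _).isSelfAdjoint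
  have hP : P = CFC.sqrt (P * Pᴴ) * (polarIsometry Pᴴ)ᴴ := by
    conv_lhs => rw [← conjTranspose_conjTranspose P, ← hpolar]
    rw [conjTranspose_mul, hT]
  have hU : ‖(polarIsometry Pᴴ)ᴴ‖ ≤ 1 :=
    (l2_opNorm_conjTranspose _).trans_le (norm_polarIsometry_le_one _)
  calc traceNorm (Pᴴ * F * P)
      = traceNorm ((polarIsometry Pᴴ)ᴴᴴ * (CFC.sqrt (P * Pᴴ) * F * CFC.sqrt (P * Pᴴ)) *
          (polarIsometry Pᴴ)ᴴ) := by
        conv_lhs => rw [hP, conjTranspose_mul, hT]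
        simp only [Matrix.mul_assoc]
    _ ≤ _ := traceNorm_conjTranspose_mul_mul_le _ hU

end TraceNorm

lemma fidelity_conj_eq_traceNorm {n : Type*} [Fintype n] [DecidableEq n] {ρ : Matrix n n ℂ}
    (hρ : ρ.PosSemidef) (M : Matrix n n ℂ) :
    fidelity ρ (M * ρ * Mᴴ) = traceNorm (CFC.sqrt ρ * Mᴴ * CFC.sqrt ρ) := by
  have hgram (S : Matrix n n ℂ) (hS : Sᴴ = S) (hSS : S * S = ρ) :
      S * (M * ρ * Mᴴ) * S = (S * Mᴴ * S)ᴴ * (S * Mᴴ * S) := by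
    subst hSS
    simp only [conjTranspose_mul, conjTranspose_conjTranspose, hS, Matrix.mul_assoc]
  rw [fidelity, matSqrt_eq_sqrt hρ, hgram _ (CFC.sqrt_nonneg ρ).isSelfAdjoint
    (CFC.sqrt_mul_sqrt_self ρ (nonneg_iff_posSemidef.mpr hρ)),
    matSqrt_eq_sqrt (posSemidef_conjTranspose_mul_self _)]
  rfl

section PartialTrace

variable {A B κ : Type*}

def curryRows (S : Matrix (A × B) κ ℂ) : Matrix A (B × κ) ℂ :=
  of fun a bk => S (a, bk.1) bk.2

lemma curryRows_mul_conjTranspose_curryRows [Fintype B] [Fintype κ] (S T : Matrix (A × B) κ ℂ) :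
    curryRows S * (curryRows T)ᴴ = ptraceB (S * Tᴴ) := by
  ext a a'
  simp only [curryRows, ptraceB, of_apply, mul_apply, conjTranspose_apply, Fintype.sum_prod_type]

lemma curryRows_mul_transpose_kronecker [Fintype A] [DecidableEq A] [Fintype B] [Fintype κ]
    (S : Matrix (A × B) κ ℂ) (G : Matrix B B ℂ) (U : Matrix κ κ ℂ) :
    curryRows S * (Gᵀ ⊗ₖ U) = curryRows (((1 : Matrix A A ℂ) ⊗ₖ G) * S * U) := by
  ext a ⟨b, l⟩
  simp only [curryRows, mul_apply, of_apply, kroneckerMap_apply, transpose_apply,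
    Fintype.sum_prod_type, one_apply, ite_mul, one_mul, zero_mul, Finset.sum_ite_irrel,
    Finset.sum_const_zero, Finset.sum_ite_eq, Finset.mem_univ, ↓reduceIte, Finset.sum_mul]
  rw [Finset.sum_comm]
  exact Finset.sum_congr rfl fun _ _ => Finset.sum_congr rfl fun _ _ => by ring

lemma trace_mul_ptraceB [Fintype A] [Fintype B] [DecidableEq B] (F : Matrix A A ℂ)
    (N : Matrix (A × B) (A × B) ℂ) :
    (F * ptraceB N).trace = ((F ⊗ₖ (1 : Matrix B B ℂ)) * N).trace := by
  simp only [trace, diag, ptraceB, of_apply, mul_apply, kroneckerMap_apply, one_apply,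
    Fintype.sum_prod_type, mul_ite, mul_one, mul_zero, ite_mul, zero_mul, Finset.sum_ite_eq,
    Finset.mem_univ, if_true, Finset.mul_sum]
  exact Finset.sum_congr rfl fun _ _ => Finset.sum_comm

lemma trace_conjTranspose_mul_kronecker_mul_mul [Fintype A] [DecidableEq A] [Fintype B]
    [DecidableEq B] [Fintype κ] (S : Matrix (A × B) κ ℂ) (F : Matrix A A ℂ) (G : Matrix B B ℂ)
    (U : Matrix κ κ ℂ) :
    (Sᴴ * (F ⊗ₖ G) * S * U).trace = ((curryRows S)ᴴ * F * curryRows S * (Gᵀ ⊗ₖ U)).trace := by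
  have hFG : (F ⊗ₖ (1 : Matrix B B ℂ)) * ((1 : Matrix A A ℂ) ⊗ₖ G) = F ⊗ₖ G := by
    rw [← mul_kronecker_mul, Matrix.mul_one, Matrix.one_mul]
  calc (Sᴴ * (F ⊗ₖ G) * S * U).trace
      = ((F ⊗ₖ (1 : Matrix B B ℂ)) * (((1 : Matrix A A ℂ) ⊗ₖ G) * S * U * Sᴴ)).trace := by
        rw [Matrix.mul_assoc, Matrix.mul_assoc, trace_mul_comm, ← hFG]
        simp only [Matrix.mul_assoc]
    _ = (F * (curryRows S * (Gᵀ ⊗ₖ U) * (curryRows S)ᴴ)).trace := by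
        rw [curryRows_mul_transpose_kronecker, curryRows_mul_conjTranspose_curryRows,
          trace_mul_ptraceB]
    _ = ((curryRows S)ᴴ * F * curryRows S * (Gᵀ ⊗ₖ U)).trace := by
        rw [trace_mul_comm, Matrix.mul_assoc, trace_mul_comm]
        simp only [Matrix.mul_assoc]

end PartialTrace

end Matrix

open Matrix

theorem global_SWSSB_implies_local_SWSSB_general
    {A B : Type*} [Fintype A] [DecidableEq A] [Fintype B] [DecidableEq B]
    (ρ : Matrix (A × B) (A × B) ℂ) (hρ : ρ.PosSemidef)
    (Ox : Matrix A A ℂ) (Oy : Matrix B B ℂ) :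
    fidelity ρ ((Ox ⊗ₖ Oyᴴ) * ρ * (Ox ⊗ₖ Oyᴴ)ᴴ) ≤
      opNorm Oy * fidelity (ptraceB ρ) (Ox * ptraceB ρ * Oxᴴ) := by
  set S := CFC.sqrt ρ
  have hS : Sᴴ = S := (CFC.sqrt_nonneg ρ).isSelfAdjoint
  have hρA : curryRows S * (curryRows S)ᴴ = ptraceB ρ := by
    rw [curryRows_mul_conjTranspose_curryRows, hS,
      CFC.sqrt_mul_sqrt_self ρ (nonneg_iff_posSemidef.mpr hρ)]
  rw [fidelity_conj_eq_traceNorm hρ, ← hρA,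
    fidelity_conj_eq_traceNorm (posSemidef_self_mul_conjTranspose _),
    show opNorm Oy = ‖Oy‖ from rfl, conjTranspose_kronecker, conjTranspose_conjTranspose]
  obtain ⟨W, hW, hXW⟩ := exists_re_trace_mul_eq_traceNorm (S * (Oxᴴ ⊗ₖ Oy) * S)
  calc traceNorm (S * (Oxᴴ ⊗ₖ Oy) * S)
      = ((curryRows S)ᴴ * Oxᴴ * curryRows S * (Oyᵀ ⊗ₖ W)).trace.re := by
        rw [← hXW, ← trace_conjTranspose_mul_kronecker_mul_mul, hS]
    _ ≤ ‖Oyᵀ ⊗ₖ W‖ * traceNorm ((curryRows S)ᴴ * Oxᴴ * curryRows S) :=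
        re_trace_mul_le_traceNorm _ _
    _ ≤ ‖Oy‖ * traceNorm ((curryRows S)ᴴ * Oxᴴ * curryRows S) := by
        refine mul_le_mul_of_nonneg_right ((l2_opNorm_kronecker_le _ _).trans ?_)
          (traceNorm_nonneg _)
        simpa using mul_le_mul (l2_opNorm_transpose_le Oy) hW (norm_nonneg W) (norm_nonneg Oy)
    _ ≤ ‖Oy‖ * traceNorm (CFC.sqrt (curryRows S * (curryRows S)ᴴ) * Oxᴴ *
          CFC.sqrt (curryRows S * (curryRows S)ᴴ)) :=
        mul_le_mul_of_nonneg_left (traceNorm_conjTranspose_mul_mul_le_sqrt _ _) (norm_nonneg Oy)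

/-- **Global SW-SSB implies local SW-SSB** (Theorem 1):
`‖O_y‖∞ · F(ρ_A, O_x ρ_A O_x†) ≥ F(ρ, (O_x ⊗ O_y†) ρ (O_x ⊗ O_y†)†)`. -/
theorem global_SWSSB_implies_local_SWSSB
    {A B : Type*} [Fintype A] [DecidableEq A] [Fintype B] [DecidableEq B]
    (ρ : Matrix (A × B) (A × B) ℂ) (hρ : ρ.PosSemidef) (hρtr : ρ.trace = 1)
    (Ox : Matrix A A ℂ) (Oy : Matrix B B ℂ) :
    fidelity ρ ((Ox ⊗ₖ Oyᴴ) * ρ * (Ox ⊗ₖ Oyᴴ)ᴴ) ≤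
      opNorm Oy * fidelity (ptraceB ρ) (Ox * ptraceB ρ * Oxᴴ) :=
  global_SWSSB_implies_local_SWSSB_general ρ hρ Ox Oy
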